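/- Let L : H → G be an isometry (L* ∘ L = Id_H) between real Hilbert spaces, let B be strictly positive on G, and let γ > 0. Define ℒ_{1/γ}(L,B) = (L* ∘ (B + γ⁻¹Id_G) ∘ L) # (L* ∘ (B + γ⁻¹Id_G)⁻¹ ∘ L)⁻¹ − γ⁻¹Id_H, where A # C = A^{1/2}(A^{−1/2} C A^{−1/2})^{1/2} A^{1/2} is the geometric mean. Then L ⊡_γ B ≼ ℒ_{1/γ}(L,B) ≼ L* ∘ B ∘ L, where L ⊡_γ B = L* ∘ (B⁻¹ + γ(Id_G − L L*))⁻¹ ∘ L. -/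

import Mathlib

/-
Put `C = B + γ⁻¹ Id`, `P = L* C L` and `Q = (L* C⁻¹ L)⁻¹`. Since `L* L = Id`, the cocomposition is
`L ⊡_γ B = Q - γ⁻¹ Id` (the solution of `(B⁻¹ + γ (Id - L L*)) y = L x` is `y = B C⁻¹ L Q x`) and
`L* B L = P - γ⁻¹ Id`, so it suffices to show `Q ≼ P # Q ≼ P`. The inequality
`2 ⟪x, y⟫ - ⟪A y, y⟫ ≤ ⟪A⁻¹ x, x⟫`, applied to `C⁻¹`, gives `Q ≼ P`. Hence
`T = P^{-1/2} Q P^{-1/2} ≼ Id`, and its positive square root `U` satisfies `T = U² ≼ U ≼ Id`;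
conjugating by `P^{1/2}` gives `Q ≼ P # Q ≼ P`. Square roots of strictly positive operators are
obtained from Banach's fixed point theorem.
-/

open ContinuousLinearMap MeasureTheory

noncomputable section

variable {E : Type*} [NormedAddCommGroup E] [InnerProductSpace ℝ E] [CompleteSpace E]
variable {H G : Type*} [NormedAddCommGroup H] [InnerProductSpace ℝ H] [CompleteSpace H]
  [NormedAddCommGroup G] [InnerProductSpace ℝ G] [CompleteSpace G]

/-- Löwner partial order: `A ≼ B` iff `B - A` is a positive operator. -/
def Loewner (A B : E →L[ℝ] E) : Prop := (B - A).IsPositive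

/-- Strictly positive operators: `α • Id ≼ A` for some `α > 0`. -/
def StrictlyPos (A : E →L[ℝ] E) : Prop :=
  IsSelfAdjoint A ∧ ∃ α : ℝ, 0 < α ∧ Loewner (α • (1 : E →L[ℝ] E)) A

/-- Bounded below linear operator. -/
def BoundedBelow (L : H →L[ℝ] G) : Prop := ∃ β : ℝ, 0 < β ∧ ∀ x : H, β * ‖x‖ ≤ ‖L x‖

/-- Resolvent cocomposition `L ⊡_γ B = L* ∘ (B⁻¹ + γ(Id − L L*))⁻¹ ∘ L`. -/
def rcc (L : H →L[ℝ] G) (γ : ℝ) (B : G →L[ℝ] G) : H →L[ℝ] H :=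
  (adjoint L) ∘L (Ring.inverse (Ring.inverse B + γ • ((1 : G →L[ℝ] G) - L ∘L adjoint L))) ∘L L

/-- Resolvent composition `L ⊙_γ B = (L ⊡_{1/γ} B⁻¹)⁻¹`. -/
def rc (L : H →L[ℝ] G) (γ : ℝ) (B : G →L[ℝ] G) : H →L[ℝ] H :=
  Ring.inverse (rcc L (1/γ) (Ring.inverse B))

/-- Parallel composition `L* ▸ B = (L* ∘ B⁻¹ ∘ L)⁻¹`. -/
def parallelComp (L : H →L[ℝ] G) (B : G →L[ℝ] G) : H →L[ℝ] H :=
  Ring.inverse ((adjoint L) ∘L (Ring.inverse B) ∘L L)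

/-- `g(A,B) = inf {λ > 0 : A ≼ λ B}`. -/
def gThomp (A B : E →L[ℝ] E) : ℝ := sInf {l : ℝ | 0 < l ∧ Loewner A (l • B)}

/-- Thompson metric. -/
def dThomp (A B : E →L[ℝ] E) : ℝ := Real.log (max (gThomp A B) (gThomp B A))

/-- The (unique) positive square root of a positive operator. -/
def opSqrt (A : E →L[ℝ] E) : E →L[ℝ] E :=
  letI := Classical.propDecidable
  if h : ∃ S : E →L[ℝ] E, S.IsPositive ∧ S * S = A then h.choose else 0

/-- Real power `A^t` of a strictly positive operator, `t ∈ (0,1)`, via the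
Balakrishnan integral formula `A^t = (sin (π t)/π) ∫₀^∞ s^{t-1} A (A + s)⁻¹ ds`. -/
def opRpow (A : E →L[ℝ] E) (t : ℝ) : E →L[ℝ] E :=
  (Real.sin (Real.pi * t) / Real.pi) •
    ∫ s in Set.Ioi (0 : ℝ), s ^ (t - 1) • (A * Ring.inverse (A + s • (1 : E →L[ℝ] E)))

/-- Geometric mean `A # B = A^{1/2} (A^{-1/2} B A^{-1/2})^{1/2} A^{1/2}`. -/
def geomMean (A B : E →L[ℝ] E) : E →L[ℝ] E :=
  opSqrt A * opSqrt (Ring.inverse (opSqrt A) * B * Ring.inverse (opSqrt A)) * opSqrt A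

/-- `t`-weighted geometric mean `A #_t B = A^{1/2} (A^{-1/2} B A^{-1/2})^t A^{1/2}`. -/
def wGeomMean (t : ℝ) (A B : E →L[ℝ] E) : E →L[ℝ] E :=
  opSqrt A * opRpow (Ring.inverse (opSqrt A) * B * Ring.inverse (opSqrt A)) t * opSqrt A

open scoped InnerProductSpace

section Hilbert

variable {F : Type*} [NormedAddCommGroup F] [InnerProductSpace ℝ F]
  {A B M X : F →L[ℝ] F}

theorem inner_le_norm_mul_sq (A : F →L[ℝ] F) (x : F) :
    ⟪A x, x⟫_ℝ ≤ ‖A‖ * ‖x‖ ^ 2 :=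
  calc ⟪A x, x⟫_ℝ ≤ ‖A x‖ * ‖x‖ := real_inner_le_norm _ _
    _ ≤ ‖A‖ * ‖x‖ * ‖x‖ := by gcongr; exact A.le_opNorm x
    _ = ‖A‖ * ‖x‖ ^ 2 := by ring

theorem two_inner_sub_inner_le_inner_of_mul_eq_one {A' : F →L[ℝ] F} (hA : A.IsPositive)
    (hAA' : A * A' = 1) (x y : F) : 2 * ⟪x, y⟫_ℝ - ⟪A y, y⟫_ℝ ≤ ⟪A' x, x⟫_ℝ := by
  have hx : A (A' x) = x := by rw [← mul_apply_eq_comp, hAA', one_apply_eq_self]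
  have hsymm : ⟪A y, A' x⟫_ℝ = ⟪y, x⟫_ℝ := by
    rw [← congrArg (⟪y, ·⟫_ℝ) hx]; exact hA.isSymmetric y (A' x)
  have h := hA.inner_nonneg_left (y - A' x)
  simp only [map_sub, inner_sub_left, inner_sub_right, hx, hsymm] at h
  linarith [real_inner_comm x y, real_inner_comm x (A' x)]

theorem apply_ringInverse_apply (hA : IsUnit A) (x : F) :
    A (Ring.inverse A x) = x := by
  rw [← mul_apply_eq_comp, Ring.mul_inverse_cancel A hA, one_apply_eq_self]

theorem ringInverse_apply_apply (hA : IsUnit A) (x : F) :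
    Ring.inverse A (A x) = x := by
  rw [← mul_apply_eq_comp, Ring.inverse_mul_cancel A hA, one_apply_eq_self]

theorem IsUnit.boundedBelow (hM : IsUnit M) : BoundedBelow M := by
  obtain ⟨u, rfl⟩ := hM
  set N : F →L[ℝ] F := ↑u⁻¹
  refine ⟨(‖N‖ + 1)⁻¹, by positivity, fun x => ?_⟩
  rw [inv_mul_le_iff₀ (by positivity)]
  calc ‖x‖ = ‖N ((u : F →L[ℝ] F) x)‖ := by
        rw [← mul_apply_eq_comp, Units.inv_mul, one_apply_eq_self]
    _ ≤ ‖N‖ * ‖(u : F →L[ℝ] F) x‖ := le_opNorm _ _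
    _ ≤ (‖N‖ + 1) * ‖(u : F →L[ℝ] F) x‖ := by gcongr; linarith

instance : IsOrderedAddMonoid (F →L[ℝ] F) where
  add_le_add_left _ _ h _ := by simpa [le_def] using h

variable [CompleteSpace F]

theorem le_of_inner_le (hA : IsSelfAdjoint A) (hB : IsSelfAdjoint B)
    (h : ∀ x, ⟪A x, x⟫_ℝ ≤ ⟪B x, x⟫_ℝ) : A ≤ B :=
  (isPositive_iff' _).mpr ⟨hB.sub hA, fun x => by
    rw [sub_apply, inner_sub_left]; linarith [h x]⟩

theorem strictlyPos_iff :
    StrictlyPos A ↔ IsSelfAdjoint A ∧ ∃ α > 0, ∀ x, α * ‖x‖ ^ 2 ≤ ⟪A x, x⟫_ℝ := by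
  refine ⟨fun ⟨hA, α, hα, h⟩ => ⟨hA, α, hα, fun x => ?_⟩,
    fun ⟨hA, α, hα, h⟩ => ⟨hA, α, hα, ?_⟩⟩
  · have := h.inner_nonneg_left x
    simp only [sub_apply, smul_apply, one_apply_eq_self, inner_sub_left, real_inner_smul_left,
      real_inner_self_eq_norm_sq] at this
    linarith
  · refine (isPositive_iff' _).mpr ⟨hA.sub (.smul (.all α) (.one _)), fun x => ?_⟩
    simp only [sub_apply, smul_apply, one_apply_eq_self, inner_sub_left, real_inner_smul_left,
      real_inner_self_eq_norm_sq]
    linarith [h x]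

theorem StrictlyPos.isPositive (hA : StrictlyPos A) : A.IsPositive := by
  obtain ⟨hsa, α, hα, h⟩ := strictlyPos_iff.mp hA
  exact (isPositive_iff' A).mpr
    ⟨hsa, fun x => (by positivity : 0 ≤ α * ‖x‖ ^ 2).trans (h x)⟩

theorem StrictlyPos.isUnit (hA : StrictlyPos A) : IsUnit A := by
  obtain ⟨-, α, hα, h⟩ := strictlyPos_iff.mp hA
  refine isUnit_of_forall_le_norm_inner_map A (c := ⟨α, hα.le⟩) hα fun x => ?_
  rw [mul_comm, Real.norm_eq_abs]
  exact (h x).trans (le_abs_self _)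

theorem StrictlyPos.add_isPositive (hA : StrictlyPos A) (hB : B.IsPositive) :
    StrictlyPos (A + B) := by
  obtain ⟨hsa, α, hα, h⟩ := strictlyPos_iff.mp hA
  refine strictlyPos_iff.mpr ⟨hsa.add hB.isSelfAdjoint, α, hα, fun x => ?_⟩
  rw [add_apply, inner_add_left]
  linarith [h x, hB.inner_nonneg_left x]

theorem StrictlyPos.add_smul_one (hA : StrictlyPos A) {c : ℝ} (hc : 0 ≤ c) :
    StrictlyPos (A + c • 1) :=
  hA.add_isPositive (isPositive_one.smul_of_nonneg hc)

theorem StrictlyPos.adjoint_conj {A : G →L[ℝ] G} (hA : StrictlyPos A) {M : H →L[ℝ] G}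
    (hM : BoundedBelow M) : StrictlyPos (adjoint M ∘L A ∘L M) := by
  obtain ⟨-, α, hα, h⟩ := strictlyPos_iff.mp hA
  obtain ⟨β, hβ, hMx⟩ := hM
  refine strictlyPos_iff.mpr ⟨(hA.isPositive.adjoint_conj M).isSelfAdjoint, α * β ^ 2,
    by positivity, fun x => ?_⟩
  rw [comp_apply, comp_apply, adjoint_inner_left]
  calc α * β ^ 2 * ‖x‖ ^ 2 = α * (β * ‖x‖) ^ 2 := by ring
    _ ≤ α * ‖M x‖ ^ 2 := by gcongr; exact hMx x
    _ ≤ ⟪A (M x), M x⟫_ℝ := h (M x)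

theorem StrictlyPos.ringInverse (hA : StrictlyPos A) : StrictlyPos (Ring.inverse A) := by
  have hsa : IsSelfAdjoint (Ring.inverse A) := hA.1.ringInverse
  convert hA.adjoint_conj hA.isUnit.ringInverse.boundedBelow using 1
  rw [hsa.adjoint_eq]
  obtain ⟨u, rfl⟩ := hA.isUnit
  rw [Ring.inverse_unit]
  change _ = (↑u⁻¹ * (↑u * ↑u⁻¹) : F →L[ℝ] F)
  simp

theorem ContinuousLinearMap.IsPositive.conj_of_isSelfAdjoint (hA : A.IsPositive)
    (hM : IsSelfAdjoint M) : (M * A * M).IsPositive := by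
  have h := hA.adjoint_conj M
  rw [hM.adjoint_eq] at h
  exact h

theorem conj_le_conj_of_isSelfAdjoint (h : A ≤ B) (hM : IsSelfAdjoint M) :
    M * A * M ≤ M * B * M := by
  rw [le_def, ← sub_mul, ← mul_sub]
  exact h.conj_of_isSelfAdjoint hM

theorem le_one_of_mul_self_le_one (hA : IsSelfAdjoint A) (h : A * A ≤ 1) : A ≤ 1 := by
  have hsq : ((1 - A) * 1 * (1 - A)).IsPositive :=
    isPositive_one.conj_of_isSelfAdjoint ((IsSelfAdjoint.one _).sub hA)
  have key : (1 - A * A) + (1 - A) * 1 * (1 - A) = (2 : ℝ) • (1 - A) := by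
    rw [two_smul]; noncomm_ring
  have h2 := (h.add hsq).smul_of_nonneg (by norm_num : (0 : ℝ) ≤ 2⁻¹)
  rwa [key, smul_smul, inv_mul_cancel₀ two_ne_zero, one_smul] at h2

theorem mul_self_le_of_le_one (hA : A.IsPositive) (h : A ≤ 1) : A * A ≤ A := by
  have key : A - A * A = (1 - A) * A * (1 - A) + A * (1 - A) * A := by noncomm_ring
  rw [le_def, key]
  exact (hA.conj_of_isSelfAdjoint ((IsSelfAdjoint.one _).sub hA.isSelfAdjoint)).add
    (h.conj_of_isSelfAdjoint hA.isSelfAdjoint)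

theorem IsSelfAdjoint.norm_le_of_abs_inner_le (hX : IsSelfAdjoint X) {r : ℝ} (hr : 0 ≤ r)
    (h : ∀ x, |⟪X x, x⟫_ℝ| ≤ r * ‖x‖ ^ 2) : ‖X‖ ≤ r := by
  rw [X.norm_eq_iSup_rayleighQuotient hX.isSymmetric]
  refine ciSup_le fun x => ?_
  rcases eq_or_ne x 0 with rfl | hx
  · simpa using hr
  · rw [rayleighQuotient, reApplyInnerSelf_apply, RCLike.re_to_real, abs_div, abs_sq,
      div_le_iff₀ (by positivity)]
    exact h x

theorem exists_isPositive_mul_self_eq_one_sub (hX : IsSelfAdjoint X) (hX1 : ‖X‖ < 1) :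
    ∃ S : F →L[ℝ] F, S.IsPositive ∧ S * S = 1 - X := by
  -- `S = 1 - T` for the fixed point `T` of `T ↦ (X + T * T) / 2`, a contraction with constant `t`
  -- on self-adjoint operators of norm `≤ t`; `t` is the smaller root of `t² - 2t + ‖X‖ = 0`.
  set t := 1 - √(1 - ‖X‖)
  have ht0 : 0 ≤ t := sub_nonneg.mpr (Real.sqrt_le_one.mpr (by linarith [norm_nonneg X]))
  have ht1 : t < 1 := sub_lt_self _ (Real.sqrt_pos.mpr (by linarith))
  have htX : ‖X‖ + t * t = 2 * t := by
    have := Real.mul_self_sqrt (by linarith : 0 ≤ 1 - ‖X‖)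
    have hsq : √(1 - ‖X‖) = 1 - t := by ring
    rw [hsq] at this
    linarith
  set K : Set (F →L[ℝ] F) := {T | ‖T‖ ≤ t ∧ IsSelfAdjoint T}
  have hK : IsComplete K := (IsClosed.inter (isClosed_le continuous_norm continuous_const)
    (isClosed_eq continuous_star continuous_id)).isComplete
  set f : (F →L[ℝ] F) → (F →L[ℝ] F) := fun T => (2⁻¹ : ℝ) • (X + T * T)
  have hfK : Set.MapsTo f K K := by
    intro T hT
    have hTT : IsSelfAdjoint (T * T) := by
      simpa only [hT.2.star_eq] using IsSelfAdjoint.star_mul_self T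
    refine ⟨?_, ?_⟩
    · calc ‖f T‖ = 2⁻¹ * ‖X + T * T‖ := by
            rw [norm_smul, Real.norm_of_nonneg (by norm_num)]
        _ ≤ 2⁻¹ * (‖X‖ + ‖T‖ * ‖T‖) := by
          gcongr; exact (norm_add_le _ _).trans (by gcongr; exact norm_mul_le _ _)
        _ ≤ 2⁻¹ * (‖X‖ + t * t) := by gcongr; exacts [hT.1, hT.1]
        _ = t := by linarith
    · exact IsSelfAdjoint.smul (IsSelfAdjoint.all _) (hX.add hTT)
  have hf : ContractingWith ⟨t, ht0⟩ (hfK.restrict f K K) := by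
    refine ⟨by exact_mod_cast ht1, LipschitzWith.of_dist_le_mul fun ⟨T, hT⟩ ⟨T', hT'⟩ => ?_⟩
    have hdiff : f T - f T' = (2⁻¹ : ℝ) • (T * (T - T') + (T - T') * T') := by
      simp only [f, ← smul_sub]; noncomm_ring
    simp only [Subtype.dist_eq, Set.MapsTo.val_restrict_apply, dist_eq_norm, hdiff, norm_smul]
    calc ‖(2⁻¹ : ℝ)‖ * ‖T * (T - T') + (T - T') * T'‖
        ≤ 2⁻¹ * (‖T‖ * ‖T - T'‖ + ‖T - T'‖ * ‖T'‖) := by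
          rw [Real.norm_of_nonneg (by norm_num)]
          gcongr
          exact (norm_add_le _ _).trans (add_le_add (norm_mul_le _ _) (norm_mul_le _ _))
      _ ≤ 2⁻¹ * (t * ‖T - T'‖ + ‖T - T'‖ * t) := by gcongr; exacts [hT.1, hT'.1]
      _ = t * ‖T - T'‖ := by ring
  obtain ⟨T, ⟨hTt, hTsa⟩, hTfix, -⟩ := hf.exists_fixedPoint' hK hfK
    (⟨by simpa using ht0, .zero _⟩ : (0 : F →L[ℝ] F) ∈ K) (edist_ne_top _ _)
  have hT2 : T * T = (2 : ℝ) • T - X := by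
    have h : (2⁻¹ : ℝ) • (X + T * T) = T := hTfix
    calc T * T = (2 : ℝ) • ((2⁻¹ : ℝ) • (X + T * T)) - X := by rw [smul_smul]; norm_num
      _ = (2 : ℝ) • T - X := by rw [h]
  refine ⟨1 - T, (isPositive_iff' _).mpr ⟨(IsSelfAdjoint.one _).sub hTsa, fun x => ?_⟩, ?_⟩
  · rw [sub_apply, one_apply_eq_self, inner_sub_left, real_inner_self_eq_norm_sq]
    nlinarith [inner_le_norm_mul_sq T x, sq_nonneg ‖x‖]
  · rw [sub_mul, mul_sub, mul_sub, hT2, two_smul]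
    noncomm_ring

theorem StrictlyPos.exists_isPositive_mul_self_eq (hA : StrictlyPos A) :
    ∃ S : F →L[ℝ] F, S.IsPositive ∧ S * S = A := by
  rcases (norm_nonneg A).eq_or_lt with hA0 | hn
  · exact ⟨0, isPositive_zero, by rw [norm_eq_zero.mp hA0.symm, mul_zero]⟩
  obtain ⟨hsa, α, hα, h⟩ := strictlyPos_iff.mp hA
  set n := ‖A‖
  set β := min α n
  have hβ : 0 < β / n := div_pos (lt_min hα hn) hn
  have hβn : β / n ≤ 1 := (div_le_one hn).mpr (min_le_right _ _)
  have hXsa : IsSelfAdjoint (1 - n⁻¹ • A) :=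
    (IsSelfAdjoint.one _).sub ((IsSelfAdjoint.all _).smul hsa)
  have hX : ‖1 - n⁻¹ • A‖ < 1 := by
    refine (hXsa.norm_le_of_abs_inner_le (r := 1 - β / n) (by linarith) fun x => ?_).trans_lt
      (by linarith)
    have hinner : ⟪(1 - n⁻¹ • A) x, x⟫_ℝ = ‖x‖ ^ 2 - n⁻¹ * ⟪A x, x⟫_ℝ := by
      rw [sub_apply, one_apply_eq_self, smul_apply, inner_sub_left, real_inner_smul_left,
        real_inner_self_eq_norm_sq]
    have hlow : β * ‖x‖ ^ 2 ≤ ⟪A x, x⟫_ℝ :=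
      (mul_le_mul_of_nonneg_right (min_le_left _ _) (sq_nonneg _)).trans (h x)
    have hup : n⁻¹ * ⟪A x, x⟫_ℝ ≤ ‖x‖ ^ 2 := by
      rw [inv_mul_le_iff₀ hn]; exact inner_le_norm_mul_sq A x
    have hlow' : β / n * ‖x‖ ^ 2 ≤ n⁻¹ * ⟪A x, x⟫_ℝ := by
      rw [div_eq_inv_mul, mul_assoc]; gcongr
    rw [hinner, abs_le]
    constructor <;> nlinarith [mul_nonneg (sub_nonneg.mpr hβn) (sq_nonneg ‖x‖)]
  obtain ⟨S, hS, hSS⟩ := exists_isPositive_mul_self_eq_one_sub hXsa hX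
  refine ⟨√n • S, hS.smul_of_nonneg (Real.sqrt_nonneg n), ?_⟩
  rw [smul_mul_smul_comm, Real.mul_self_sqrt hn.le, hSS, sub_sub_cancel, smul_smul,
    mul_inv_cancel₀ hn.ne', one_smul]

theorem StrictlyPos.opSqrt_spec (hA : StrictlyPos A) :
    (opSqrt A).IsPositive ∧ opSqrt A * opSqrt A = A := by
  have h := hA.exists_isPositive_mul_self_eq
  rw [opSqrt, dif_pos h]
  exact h.choose_spec

theorem geomMean_mem_Icc_of_le {P Q : F →L[ℝ] F} (hP : StrictlyPos P) (hQ : StrictlyPos Q)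
    (hQP : Q ≤ P) : geomMean P Q ∈ Set.Icc Q P := by
  obtain ⟨hS, hSS⟩ := hP.opSqrt_spec
  set S := opSqrt P
  have hSu : IsUnit S := isUnit_mul_self_iff.mp (hSS ▸ hP.isUnit)
  have hS' : IsSelfAdjoint (Ring.inverse S) := hS.isSelfAdjoint.ringInverse
  have hSS' : Ring.inverse S * (S * S) * Ring.inverse S = 1 := by
    obtain ⟨u, hu⟩ := hSu; rw [← hu, Ring.inverse_unit]; simp
  have hS'S : S * (Ring.inverse S * Q * Ring.inverse S) * S = Q := by
    obtain ⟨u, hu⟩ := hSu; rw [← hu, Ring.inverse_unit]; simp [mul_assoc]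
  set T := Ring.inverse S * Q * Ring.inverse S
  have hT : StrictlyPos T := by
    have h := hQ.adjoint_conj hSu.ringInverse.boundedBelow
    rwa [hS'.adjoint_eq] at h
  have hT1 : T ≤ 1 := by
    have h := conj_le_conj_of_isSelfAdjoint hQP hS'
    rwa [← hSS, hSS'] at h
  obtain ⟨hU, hUU⟩ := hT.opSqrt_spec
  have hU1 : opSqrt T ≤ 1 := le_one_of_mul_self_le_one hU.isSelfAdjoint (by rwa [hUU])
  have hTU : T ≤ opSqrt T := by
    have h := mul_self_le_of_le_one hU hU1
    rwa [hUU] at h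
  change S * opSqrt T * S ∈ Set.Icc Q P
  refine ⟨?_, ?_⟩
  · simpa only [hS'S] using conj_le_conj_of_isSelfAdjoint hTU hS.isSelfAdjoint
  · simpa only [mul_one, hSS] using conj_le_conj_of_isSelfAdjoint hU1 hS.isSelfAdjoint

end Hilbert

section Isometry

variable {L : H →L[ℝ] G}

theorem adjoint_map_of_adjoint_comp_eq_one (hL : adjoint L ∘L L = 1) (x : H) :
    adjoint L (L x) = x := by
  rw [← comp_apply, hL, one_apply_eq_self]

theorem inner_map_map_of_adjoint_comp_eq_one (hL : adjoint L ∘L L = 1) (x y : H) :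
    ⟪L x, L y⟫_ℝ = ⟪x, y⟫_ℝ := by
  rw [← adjoint_inner_left, adjoint_map_of_adjoint_comp_eq_one hL]

theorem boundedBelow_of_adjoint_comp_eq_one (hL : adjoint L ∘L L = 1) : BoundedBelow L := by
  refine ⟨1, one_pos, fun x => (one_mul ‖x‖).trans_le (le_of_eq ?_)⟩
  rw [← sq_eq_sq₀ (norm_nonneg _) (norm_nonneg _), ← real_inner_self_eq_norm_sq,
    ← real_inner_self_eq_norm_sq, inner_map_map_of_adjoint_comp_eq_one hL]

theorem adjoint_conj_add_smul_one (hL : adjoint L ∘L L = 1) (A : G →L[ℝ] G) (c : ℝ) :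
    adjoint L ∘L (A + c • 1) ∘L L = adjoint L ∘L A ∘L L + c • 1 := by
  ext x
  simp [adjoint_map_of_adjoint_comp_eq_one hL]

theorem isPositive_one_sub_comp_adjoint (hL : adjoint L ∘L L = 1) :
    (1 - L ∘L adjoint L).IsPositive := by
  have hE : IsIdempotentElem (L ∘L adjoint L) := by
    change L ∘L (adjoint L ∘L L) ∘L adjoint L = L ∘L adjoint L
    rw [hL]; rfl
  rw [hE.one_sub.isPositive_iff_isSelfAdjoint]
  exact (IsSelfAdjoint.one _).sub (isPositive_self_comp_adjoint L).isSelfAdjoint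

theorem parallelComp_le_adjoint_conj (hL : adjoint L ∘L L = 1) {C : G →L[ℝ] G}
    (hC : StrictlyPos C) : parallelComp L C ≤ adjoint L ∘L C ∘L L := by
  have hLb := boundedBelow_of_adjoint_comp_eq_one hL
  have hR := hC.ringInverse.adjoint_conj hLb
  refine le_of_inner_le hR.ringInverse.1 (hC.adjoint_conj hLb).1 fun x => ?_
  set u := parallelComp L C x
  have hx : adjoint L (Ring.inverse C (L u)) = x := apply_ringInverse_apply hR.isUnit x
  have key := two_inner_sub_inner_le_inner_of_mul_eq_one hC.ringInverse.isPositive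
    (Ring.inverse_mul_cancel C hC.isUnit) (L x) (L u)
  rw [inner_map_map_of_adjoint_comp_eq_one hL, ← adjoint_inner_left L u, hx] at key
  rw [comp_apply, comp_apply, adjoint_inner_left, real_inner_comm]
  linarith

theorem rcc_eq_parallelComp_sub (hL : adjoint L ∘L L = 1) {B : G →L[ℝ] G} (hB : StrictlyPos B)
    {γ : ℝ} (hγ : 0 < γ) : rcc L γ B = parallelComp L (B + γ⁻¹ • 1) - γ⁻¹ • 1 := by
  set C := B + γ⁻¹ • (1 : G →L[ℝ] G)
  have hC : StrictlyPos C := hB.add_smul_one (inv_nonneg.mpr hγ.le)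
  have hR := hC.ringInverse.adjoint_conj (boundedBelow_of_adjoint_comp_eq_one hL)
  set D := Ring.inverse B + γ • (1 - L ∘L adjoint L)
  have hD : StrictlyPos D := hB.ringInverse.add_isPositive
    ((isPositive_one_sub_comp_adjoint hL).smul_of_nonneg hγ.le)
  ext x
  set u := parallelComp L C x
  set v := Ring.inverse C (L u)
  have hCv : C v = L u := apply_ringInverse_apply hC.isUnit _
  have hLv : adjoint L v = x := apply_ringInverse_apply hR.isUnit x
  have hBv : B v = L u - γ⁻¹ • v := by
    rw [← hCv]; simp [C]
  have hLBv : adjoint L (B v) = u - γ⁻¹ • x := by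
    rw [hBv, map_sub, map_smul, hLv, adjoint_map_of_adjoint_comp_eq_one hL]
  have hDBv : D (B v) = L x := by
    have hDapp : D (B v) = v + γ • (B v - L (adjoint L (B v))) := by
      simp only [D, add_apply, smul_apply, sub_apply, one_apply_eq_self, comp_apply,
        ringInverse_apply_apply hB.isUnit]
    rw [hDapp, hLBv, hBv, map_sub, map_smul, sub_sub_sub_cancel_left, ← smul_sub, smul_smul,
      mul_inv_cancel₀ hγ.ne', one_smul, add_sub_cancel]
  have hDinv : Ring.inverse D (L x) = B v := by
    rw [← hDBv, ringInverse_apply_apply hD.isUnit]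
  change adjoint L (Ring.inverse D (L x)) = u - γ⁻¹ • x
  rw [hDinv, hLBv]

end Isometry

theorem geom_interpolation (L : H →L[ℝ] G) (hL : (adjoint L) ∘L L = 1)
    (B : G →L[ℝ] G) (hB : StrictlyPos B) (γ : ℝ) (hγ : 0 < γ) :
    Loewner (rcc L γ B)
        (geomMean ((adjoint L) ∘L (B + γ⁻¹ • (1 : G →L[ℝ] G)) ∘L L)
          (Ring.inverse ((adjoint L) ∘L (Ring.inverse (B + γ⁻¹ • (1 : G →L[ℝ] G))) ∘L L))
          - γ⁻¹ • (1 : H →L[ℝ] H)) ∧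
      Loewner
        (geomMean ((adjoint L) ∘L (B + γ⁻¹ • (1 : G →L[ℝ] G)) ∘L L)
          (Ring.inverse ((adjoint L) ∘L (Ring.inverse (B + γ⁻¹ • (1 : G →L[ℝ] G))) ∘L L))
          - γ⁻¹ • (1 : H →L[ℝ] H))
        ((adjoint L) ∘L B ∘L L) := by
  have hC : StrictlyPos (B + γ⁻¹ • (1 : G →L[ℝ] G)) := hB.add_smul_one (inv_nonneg.mpr hγ.le)
  have hLb := boundedBelow_of_adjoint_comp_eq_one hL
  obtain ⟨hlow, hup⟩ := geomMean_mem_Icc_of_le (hC.adjoint_conj hLb)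
    (hC.ringInverse.adjoint_conj hLb).ringInverse (parallelComp_le_adjoint_conj hL hC)
  rw [rcc_eq_parallelComp_sub hL hB hγ,
    eq_sub_of_add_eq (adjoint_conj_add_smul_one hL B γ⁻¹).symm]
  -- `Loewner A B` unfolds to Mathlib's Loewner order `A ≤ B`.
  exact ⟨sub_le_sub_right hlow _, sub_le_sub_right hup _⟩

end
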